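/- Let k₃ > 0, k₄ > 0, k₅ > 0. Then there exists a constant C > 0, depending only on k₃, k₄, k₅, such that for all 3×3 real matrices S, S̃ and all h, h̃ ∈ ℝ³, setting Γ_{ijk} := S_{ij} h_k − S̃_{ij} h̃_k: Σ_{i,j,k} ( Σ_{l,m,n} Θ_{ijklmn} Γ_{lmn} )² ≤ C Σ_{i,j,k,l,m,n} Γ_{ijk} Θ_{ijklmn} Γ_{lmn}. -/
import Mathlib

open Matrix

/-- Kronecker delta on `Fin 3`. -/
def kron (i j : Fin 3) : ℝ := if i = j then 1 else 0

/-- The sixth-order tensor `Θ` built from the constants `k₃, k₄, k₅`. -/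
def ThetaT (k₃ k₄ k₅ : ℝ) (i j k l m n : Fin 3) : ℝ :=
  k₃ * (kron i j * kron l m * kron k n)
    + k₅ * (kron i l * kron m n * kron j k - kron m i * kron l n * kron j k
        - kron l j * kron m n * kron i k + kron j m * kron l n * kron i k)
    + k₄ * (kron k n * kron j m * kron i l + kron k m * kron j l * kron i n
        + kron k l * kron j n * kron i m - kron k n * kron j l * kron i m
        - kron k m * kron j n * kron i l - kron k l * kron j m * kron i n)

/-- Trace part `t_k = Σ_l Γ_llk`. -/
def tt (Γ : Fin 3 → Fin 3 → Fin 3 → ℝ) (k : Fin 3) : ℝ := Γ 0 0 k + Γ 1 1 k + Γ 2 2 k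

/-- `c_i = Σ_m Γ_imm − Σ_n Γ_nin`. -/
def cc (Γ : Fin 3 → Fin 3 → Fin 3 → ℝ) (i : Fin 3) : ℝ :=
  (Γ i 0 0 + Γ i 1 1 + Γ i 2 2) - (Γ 0 i 0 + Γ 1 i 1 + Γ 2 i 2)

/-- The totally antisymmetric contraction of `Γ`. -/
def DD (Γ : Fin 3 → Fin 3 → Fin 3 → ℝ) : ℝ :=
  Γ 0 1 2 + Γ 1 2 0 + Γ 2 0 1 - Γ 1 0 2 - Γ 0 2 1 - Γ 2 1 0

set_option maxHeartbeats 1000000 in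
/-- Closed form of `Θ` applied to `Γ`. -/
lemma apply_eq (k₃ k₄ k₅ : ℝ) (Γ : Fin 3 → Fin 3 → Fin 3 → ℝ) (i j k : Fin 3) :
    (∑ l, ∑ m, ∑ n, ThetaT k₃ k₄ k₅ i j k l m n * Γ l m n)
      = k₃ * kron i j * tt Γ k + k₅ * (kron j k * cc Γ i - kron i k * cc Γ j)
        + k₄ * (Γ i j k + Γ j k i + Γ k i j - Γ j i k - Γ i k j - Γ k j i) := by
  fin_cases i <;> fin_cases j <;> fin_cases k <;>
    simp [Fin.sum_univ_three, ThetaT, kron, tt, cc] <;> ring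

set_option maxHeartbeats 1000000 in
lemma sq_eq (k₃ k₄ k₅ : ℝ) (Γ : Fin 3 → Fin 3 → Fin 3 → ℝ) :
    (∑ i, ∑ j, ∑ k, (∑ l, ∑ m, ∑ n, ThetaT k₃ k₄ k₅ i j k l m n * Γ l m n) ^ 2)
      = 3*k₃^2 * (tt Γ 0^2 + tt Γ 1^2 + tt Γ 2^2)
        + 4*k₅^2 * (cc Γ 0^2 + cc Γ 1^2 + cc Γ 2^2) + 6*k₄^2 * DD Γ ^2 := by
  simp only [apply_eq]
  simp only [Fin.sum_univ_three, DD]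
  simp only [kron, show ((0:Fin 3)=1) = False from by decide,
    show ((0:Fin 3)=2) = False from by decide, show ((1:Fin 3)=0) = False from by decide,
    show ((1:Fin 3)=2) = False from by decide, show ((2:Fin 3)=0) = False from by decide,
    show ((2:Fin 3)=1) = False from by decide, eq_self_iff_true, if_true, if_false,
    mul_one, mul_zero, zero_mul, one_mul, sub_zero, zero_sub, add_zero, zero_add]
  ring

set_option maxHeartbeats 1000000 in
lemma quad_eq (k₃ k₄ k₅ : ℝ) (Γ : Fin 3 → Fin 3 → Fin 3 → ℝ) :
    (∑ i, ∑ j, ∑ k, ∑ l, ∑ m, ∑ n,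
        Γ i j k * ThetaT k₃ k₄ k₅ i j k l m n * Γ l m n)
      = k₃ * (tt Γ 0^2 + tt Γ 1^2 + tt Γ 2^2)
        + k₅ * (cc Γ 0^2 + cc Γ 1^2 + cc Γ 2^2) + k₄ * DD Γ ^2 := by
  have h : ∀ i j k : Fin 3, (∑ l, ∑ m, ∑ n,
      Γ i j k * ThetaT k₃ k₄ k₅ i j k l m n * Γ l m n)
      = Γ i j k * ∑ l, ∑ m, ∑ n, ThetaT k₃ k₄ k₅ i j k l m n * Γ l m n := by
    intro i j k
    simp only [Finset.mul_sum, mul_assoc]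
  simp only [h, apply_eq]
  simp only [Fin.sum_univ_three, DD, tt, cc]
  simp only [kron, show ((0:Fin 3)=1) = False from by decide,
    show ((0:Fin 3)=2) = False from by decide, show ((1:Fin 3)=0) = False from by decide,
    show ((1:Fin 3)=2) = False from by decide, show ((2:Fin 3)=0) = False from by decide,
    show ((2:Fin 3)=1) = False from by decide, eq_self_iff_true, if_true, if_false,
    mul_one, mul_zero, zero_mul, one_mul, sub_zero, zero_sub, add_zero, zero_add]
  ring

theorem Theta_algebraic_inequality (k₃ k₄ k₅ : ℝ) (hk₃ : 0 < k₃) (hk₄ : 0 < k₄)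
    (hk₅ : 0 < k₅) :
    ∃ C : ℝ, 0 < C ∧
      ∀ (S S' : Matrix (Fin 3) (Fin 3) ℝ) (h h' : Fin 3 → ℝ)
        (Γ : Fin 3 → Fin 3 → Fin 3 → ℝ),
        (∀ i j k, Γ i j k = S i j * h k - S' i j * h' k) →
        (∑ i, ∑ j, ∑ k, (∑ l, ∑ m, ∑ n, ThetaT k₃ k₄ k₅ i j k l m n * Γ l m n) ^ 2)
          ≤ C * ∑ i, ∑ j, ∑ k, ∑ l, ∑ m, ∑ n,
              Γ i j k * ThetaT k₃ k₄ k₅ i j k l m n * Γ l m n := by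
  refine ⟨3*k₃ + 4*k₅ + 6*k₄, by positivity, ?_⟩
  intro S S' h h' Γ _
  rw [sq_eq, quad_eq]
  nlinarith [mul_nonneg (mul_pos hk₃ hk₅).le (sq_nonneg (tt Γ 0)),
    mul_nonneg (mul_pos hk₃ hk₅).le (sq_nonneg (tt Γ 1)),
    mul_nonneg (mul_pos hk₃ hk₅).le (sq_nonneg (tt Γ 2)),
    mul_nonneg (mul_pos hk₃ hk₄).le (sq_nonneg (tt Γ 0)),
    mul_nonneg (mul_pos hk₃ hk₄).le (sq_nonneg (tt Γ 1)),
    mul_nonneg (mul_pos hk₃ hk₄).le (sq_nonneg (tt Γ 2)),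
    mul_nonneg (mul_pos hk₃ hk₅).le (sq_nonneg (cc Γ 0)),
    mul_nonneg (mul_pos hk₃ hk₅).le (sq_nonneg (cc Γ 1)),
    mul_nonneg (mul_pos hk₃ hk₅).le (sq_nonneg (cc Γ 2)),
    mul_nonneg (mul_pos hk₄ hk₅).le (sq_nonneg (cc Γ 0)),
    mul_nonneg (mul_pos hk₄ hk₅).le (sq_nonneg (cc Γ 1)),
    mul_nonneg (mul_pos hk₄ hk₅).le (sq_nonneg (cc Γ 2)),
    mul_nonneg (mul_pos hk₃ hk₄).le (sq_nonneg (DD Γ)),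
    mul_nonneg (mul_pos hk₄ hk₅).le (sq_nonneg (DD Γ))]
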